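/- For every prime quadratic module M in M_n(R), the set J = {B ∈ M_n(R) : B^T B ∈ supp M} is a two-sided ideal of M_n(R), equal to M_n(p(supp M)), and J ∩ S_n(R) = supp M. -/

import Mathlib

open Matrix

/-- A quadratic module in `M_n(R)`. -/
def IsQM {n : ℕ} {R : Type*} [CommRing R] (M : Set (Matrix (Fin n) (Fin n) R)) : Prop :=
  (∀ A ∈ M, A.IsSymm) ∧ (1 : Matrix (Fin n) (Fin n) R) ∈ M ∧
  (∀ a ∈ M, ∀ b ∈ M, a + b ∈ M) ∧
  ∀ (A : Matrix (Fin n) (Fin n) R), ∀ m ∈ M, Aᵀ * m * A ∈ M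

/-- A prime quadratic module in `M_n(R)`. -/
def IsPrimeQM {n : ℕ} {R : Type*} [CommRing R] (M : Set (Matrix (Fin n) (Fin n) R)) : Prop :=
  IsQM M ∧ -(1 : Matrix (Fin n) (Fin n) R) ∉ M ∧
  ∀ (A : Matrix (Fin n) (Fin n) R) (r : R), A.IsSymm → r ^ 2 • A ∈ M →
    A ∈ M ∨ r • (1 : Matrix (Fin n) (Fin n) R) ∈ M ∩ (-M)

/-! Let `I = {r | r • 1 ∈ supp M}`. Since `2 • 1 ∉ supp M` (otherwise `-1 = -2 + 1 ∈ M`),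
primality lets one halve: `2 • Z ∈ supp M` implies `Z ∈ supp M` for symmetric `Z`. Together with
the polarization identity `Aᵀ X B + Bᵀ X A ∈ supp M` for `X ∈ supp M`, this makes `I` an ideal,
shows that it is the set of entries of elements of `supp M`, and that a symmetric matrix lies in
`supp M` iff all its entries lie in `I`. Finally, if `Bᵀ B ∈ supp M` then
`(∑ₖ B k j ^ 2) • 1 ∈ supp M`; as `supp M` is a face of `M`, each `B k j ^ 2 • 1` lies in it, and
primality applied to `A = -1` gives `B k j ∈ I`. Hence `{B | Bᵀ B ∈ supp M} = M_n(I)`. -/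

namespace IsQM

variable {n : ℕ} {R : Type*} [CommRing R] {M : Set (Matrix (Fin n) (Fin n) R)}

lemma isSymm (hM : IsQM M) {A : Matrix (Fin n) (Fin n) R} (hA : A ∈ M) : A.IsSymm := hM.1 A hA

lemma one_mem (hM : IsQM M) : (1 : Matrix (Fin n) (Fin n) R) ∈ M := hM.2.1

lemma add_mem (hM : IsQM M) {A B : Matrix (Fin n) (Fin n) R} (hA : A ∈ M) (hB : B ∈ M) :
    A + B ∈ M :=
  hM.2.2.1 A hA B hB

lemma transpose_mul_mul_mem (hM : IsQM M) (A : Matrix (Fin n) (Fin n) R)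
    {X : Matrix (Fin n) (Fin n) R} (hX : X ∈ M) : Aᵀ * X * A ∈ M :=
  hM.2.2.2 A X hX

lemma zero_mem (hM : IsQM M) : (0 : Matrix (Fin n) (Fin n) R) ∈ M := by
  simpa using hM.transpose_mul_mul_mem 0 hM.one_mem

lemma sq_smul_one_mem (hM : IsQM M) (r : R) : r ^ 2 • (1 : Matrix (Fin n) (Fin n) R) ∈ M := by
  simpa [sq, smul_smul] using hM.transpose_mul_mul_mem (r • 1) hM.one_mem

def supp (hM : IsQM M) : AddSubgroup (Matrix (Fin n) (Fin n) R) where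
  carrier := M ∩ -M
  add_mem' {A B} hA hB := ⟨hM.add_mem hA.1 hB.1, by simpa using hM.add_mem hB.2 hA.2⟩
  zero_mem' := ⟨hM.zero_mem, by simpa using hM.zero_mem⟩
  neg_mem' {A} hA := ⟨hA.2, by simpa using hA.1⟩

lemma transpose_mul_mul_mem_supp (hM : IsQM M) (A : Matrix (Fin n) (Fin n) R)
    {X : Matrix (Fin n) (Fin n) R} (hX : X ∈ hM.supp) : Aᵀ * X * A ∈ hM.supp :=
  ⟨hM.transpose_mul_mul_mem A hX.1, by simpa using hM.transpose_mul_mul_mem A hX.2⟩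

lemma transpose_mul_mul_add_mem_supp (hM : IsQM M) (A B : Matrix (Fin n) (Fin n) R)
    {X : Matrix (Fin n) (Fin n) R} (hX : X ∈ hM.supp) :
    Aᵀ * X * B + Bᵀ * X * A ∈ hM.supp := by
  have polarization : Aᵀ * X * B + Bᵀ * X * A
      = (A + B)ᵀ * X * (A + B) - Aᵀ * X * A - Bᵀ * X * B := by
    simp only [transpose_add, add_mul, mul_add]; abel
  rw [polarization]
  have hconj := fun C => hM.transpose_mul_mul_mem_supp C hX
  exact sub_mem (sub_mem (hconj _) (hconj _)) (hconj _)

lemma diag_smul_one_mem_supp (hM : IsQM M) {X : Matrix (Fin n) (Fin n) R} (hX : X ∈ hM.supp)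
    (i : Fin n) : X i i • (1 : Matrix (Fin n) (Fin n) R) ∈ hM.supp := by
  have h : X i i • (1 : Matrix (Fin n) (Fin n) R)
      = ∑ p, (single i p (1 : R))ᵀ * X * single i p 1 := by
    simp [transpose_single, ← sum_single_one, Finset.smul_sum]
  rw [h]
  exact sum_mem fun p _ => hM.transpose_mul_mul_mem_supp _ hX

lemma mem_supp_of_sum_mem_supp (hM : IsQM M) {ι : Type*} {s : Finset ι}
    {f : ι → Matrix (Fin n) (Fin n) R} (hf : ∀ k ∈ s, f k ∈ M) (hs : ∑ k ∈ s, f k ∈ hM.supp)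
    {i : ι} (hi : i ∈ s) : f i ∈ hM.supp := by
  classical
  refine ⟨hf i hi, ?_⟩
  have h : -f i = -∑ k ∈ s, f k + ∑ k ∈ s.erase i, f k := by
    rw [← Finset.add_sum_erase s f hi]; abel
  show -f i ∈ M
  rw [h]
  exact hM.add_mem hs.2 (Finset.sum_induction f (· ∈ M) (fun _ _ => hM.add_mem) hM.zero_mem
    fun k hk => hf k (Finset.mem_of_mem_erase hk))

end IsQM

namespace IsPrimeQM

variable {n : ℕ} {R : Type*} [CommRing R] {M : Set (Matrix (Fin n) (Fin n) R)}

lemma isQM (hM : IsPrimeQM M) : IsQM M := hM.1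

lemma neg_one_not_mem (hM : IsPrimeQM M) : -(1 : Matrix (Fin n) (Fin n) R) ∉ M := hM.2.1

lemma mem_or_smul_one_mem_supp_of_sq_smul_mem (hM : IsPrimeQM M) {A : Matrix (Fin n) (Fin n) R}
    (hA : A.IsSymm) {r : R} (h : r ^ 2 • A ∈ M) :
    A ∈ M ∨ r • (1 : Matrix (Fin n) (Fin n) R) ∈ hM.isQM.supp :=
  hM.2.2 A r hA h

lemma two_smul_one_not_mem_supp (hM : IsPrimeQM M) :
    (2 : R) • (1 : Matrix (Fin n) (Fin n) R) ∉ hM.isQM.supp := by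
  intro h
  have : -((2 : R) • (1 : Matrix (Fin n) (Fin n) R)) + 1 = -1 := by rw [two_smul]; abel
  exact hM.neg_one_not_mem (this ▸ hM.isQM.add_mem h.2 hM.isQM.one_mem)

lemma mem_of_two_smul_mem_supp (hM : IsPrimeQM M) {Z : Matrix (Fin n) (Fin n) R}
    (hZ : Z.IsSymm) (h : (2 : R) • Z ∈ hM.isQM.supp) : Z ∈ M := by
  have h4 : (2 : R) ^ 2 • Z ∈ hM.isQM.supp := by
    rw [sq, mul_smul, two_smul]; exact add_mem h h
  exact (hM.mem_or_smul_one_mem_supp_of_sq_smul_mem hZ h4.1).resolve_right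
    hM.two_smul_one_not_mem_supp

lemma mem_supp_of_two_smul_mem_supp (hM : IsPrimeQM M) {Z : Matrix (Fin n) (Fin n) R}
    (hZ : Z.IsSymm) (h : (2 : R) • Z ∈ hM.isQM.supp) : Z ∈ hM.isQM.supp :=
  ⟨hM.mem_of_two_smul_mem_supp hZ h,
    hM.mem_of_two_smul_mem_supp hZ.neg (by rw [smul_neg]; exact neg_mem h)⟩

lemma mul_smul_one_mem_supp (hM : IsPrimeQM M) {a : R}
    (ha : a • (1 : Matrix (Fin n) (Fin n) R) ∈ hM.isQM.supp) (r : R) :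
    (r * a) • (1 : Matrix (Fin n) (Fin n) R) ∈ hM.isQM.supp := by
  refine hM.mem_supp_of_two_smul_mem_supp (isSymm_one.smul _) ?_
  have h := hM.isQM.transpose_mul_mul_add_mem_supp 1 (r • 1) ha
  have e : (1 : Matrix (Fin n) (Fin n) R)ᵀ * (a • 1) * (r • 1) + (r • 1)ᵀ * (a • 1) * 1
      = (2 : R) • (r * a) • (1 : Matrix (Fin n) (Fin n) R) := by
    simp only [transpose_one, transpose_smul, one_mul, mul_one, smul_mul_smul_comm, smul_smul]
    rw [← add_smul, mul_comm a r, two_mul]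
  rwa [e] at h

/-- This is `p(supp M)`, see `image_diag_supp`. -/
def suppIdeal (hM : IsPrimeQM M) : Ideal R where
  carrier := {r | r • (1 : Matrix (Fin n) (Fin n) R) ∈ hM.isQM.supp}
  add_mem' ha hb := by simpa only [Set.mem_ofPred_eq, add_smul] using add_mem ha hb
  zero_mem' := by simpa only [Set.mem_ofPred_eq, zero_smul] using zero_mem _
  smul_mem' r _ ha := hM.mul_smul_one_mem_supp ha r

lemma mem_suppIdeal (hM : IsPrimeQM M) {r : R} :
    r ∈ hM.suppIdeal ↔ r • (1 : Matrix (Fin n) (Fin n) R) ∈ hM.isQM.supp := Iff.rfl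

lemma mem_suppIdeal_of_two_mul_mem (hM : IsPrimeQM M) {a : R} (h : 2 * a ∈ hM.suppIdeal) :
    a ∈ hM.suppIdeal :=
  hM.mem_supp_of_two_smul_mem_supp (isSymm_one.smul _) (by rwa [smul_smul])

lemma mem_suppIdeal_of_sq_mem (hM : IsPrimeQM M) {r : R} (h : r ^ 2 ∈ hM.suppIdeal) :
    r ∈ hM.suppIdeal :=
  (hM.mem_or_smul_one_mem_supp_of_sq_smul_mem isSymm_one.neg (by simpa using h.2)).resolve_left
    hM.neg_one_not_mem

lemma diag_mem_suppIdeal (hM : IsPrimeQM M) {X : Matrix (Fin n) (Fin n) R}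
    (hX : X ∈ hM.isQM.supp) (i : Fin n) : X i i ∈ hM.suppIdeal :=
  hM.isQM.diag_smul_one_mem_supp hX i

lemma entry_mem_suppIdeal (hM : IsPrimeQM M) {X : Matrix (Fin n) (Fin n) R}
    (hX : X ∈ hM.isQM.supp) (i j : Fin n) : X i j ∈ hM.suppIdeal := by
  refine hM.mem_suppIdeal_of_two_mul_mem ?_
  have h := hM.diag_mem_suppIdeal
    (hM.isQM.transpose_mul_mul_add_mem_supp (single i i 1) (single j i 1) hX) i
  have hji : X j i = X i j := (hM.isQM.isSymm hX.1).apply i j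
  simpa [transpose_single, hji, two_mul] using h

lemma single_add_single_mem_supp (hM : IsPrimeQM M) {c : R} (hc : c ∈ hM.suppIdeal)
    (p q : Fin n) : single p q c + single q p c ∈ hM.isQM.supp := by
  simpa [transpose_single] using
    hM.isQM.transpose_mul_mul_add_mem_supp (single p p 1) (single p q 1) hc

lemma mem_supp_of_isSymm (hM : IsPrimeQM M) {Z : Matrix (Fin n) (Fin n) R} (hZ : Z.IsSymm)
    (h : ∀ i j, Z i j ∈ hM.suppIdeal) : Z ∈ hM.isQM.supp := by
  refine hM.mem_supp_of_two_smul_mem_supp hZ ?_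
  have e : (2 : R) • Z = ∑ p, ∑ q, (single p q (Z p q) + single q p (Z p q)) := by
    have hT : Zᵀ = ∑ p, ∑ q, single q p (Z p q) := by
      rw [Finset.sum_comm]; exact matrix_eq_sum_single Zᵀ
    rw [Finset.sum_congr rfl fun p _ => Finset.sum_add_distrib, Finset.sum_add_distrib,
      ← matrix_eq_sum_single, ← hT, hZ.eq, two_smul]
  rw [e]
  exact sum_mem fun p _ => sum_mem fun q _ => hM.single_add_single_mem_supp (h p q) p q

lemma entry_mem_suppIdeal_of_transpose_mul_self_mem_supp (hM : IsPrimeQM M)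
    {B : Matrix (Fin n) (Fin n) R} (hB : Bᵀ * B ∈ hM.isQM.supp) (i j : Fin n) :
    B i j ∈ hM.suppIdeal := by
  refine hM.mem_suppIdeal_of_sq_mem (hM.isQM.mem_supp_of_sum_mem_supp
    (f := fun k => B k j ^ 2 • (1 : Matrix (Fin n) (Fin n) R))
    (fun k _ => hM.isQM.sq_smul_one_mem _) ?_ (Finset.mem_univ i))
  rw [← Finset.sum_smul, ← hM.mem_suppIdeal]
  simpa [mul_apply, sq] using hM.diag_mem_suppIdeal hB j

lemma transpose_mul_self_mem_supp_iff (hM : IsPrimeQM M) {B : Matrix (Fin n) (Fin n) R} :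
    Bᵀ * B ∈ hM.isQM.supp ↔ B ∈ hM.suppIdeal.toTwoSided.matrix (Fin n) := by
  refine ⟨fun hB i j => Ideal.mem_toTwoSided.2
    (hM.entry_mem_suppIdeal_of_transpose_mul_self_mem_supp hB i j), fun hB => ?_⟩
  have hBB := TwoSidedIdeal.mul_mem_left _ Bᵀ B hB
  exact hM.mem_supp_of_isSymm (isSymm_transpose_mul_self B)
    fun i j => Ideal.mem_toTwoSided.1 (hBB i j)

lemma image_diag_supp (hM : IsPrimeQM M) (i : Fin n) :
    (fun A : Matrix (Fin n) (Fin n) R => A i i) '' (M ∩ -M) = hM.suppIdeal := by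
  ext r
  refine ⟨?_, fun hr => ⟨r • 1, hr, by simp⟩⟩
  rintro ⟨X, hX, rfl⟩
  exact hM.diag_mem_suppIdeal hX i

end IsPrimeQM

theorem stmt11 {n : ℕ} [NeZero n] {R : Type*} [CommRing R]
    (M : Set (Matrix (Fin n) (Fin n) R)) (hM : IsPrimeQM M) :
    (∃ I : TwoSidedIdeal (Matrix (Fin n) (Fin n) R),
        (I : Set (Matrix (Fin n) (Fin n) R)) = {B | Bᵀ * B ∈ M ∩ (-M)}) ∧
      {B : Matrix (Fin n) (Fin n) R | Bᵀ * B ∈ M ∩ (-M)} =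
        {B : Matrix (Fin n) (Fin n) R |
          ∀ i j, B i j ∈ (fun A : Matrix (Fin n) (Fin n) R => A 0 0) '' (M ∩ (-M))} ∧
      {B : Matrix (Fin n) (Fin n) R | Bᵀ * B ∈ M ∩ (-M)} ∩
        {A : Matrix (Fin n) (Fin n) R | A.IsSymm} = M ∩ (-M) := by
  have hJ : {B : Matrix (Fin n) (Fin n) R | Bᵀ * B ∈ M ∩ (-M)}
      = hM.suppIdeal.toTwoSided.matrix (Fin n) :=
    Set.ext fun _ => hM.transpose_mul_self_mem_supp_iff
  refine ⟨⟨_, hJ.symm⟩, ?_, ?_⟩ <;> rw [hJ]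
  · ext B
    simp [hM.image_diag_supp]
  · ext X
    simp only [Set.mem_inter_iff, SetLike.mem_coe, TwoSidedIdeal.mem_matrix,
      Ideal.mem_toTwoSided, Set.mem_ofPred_eq]
    exact ⟨fun ⟨hX, hsymm⟩ => hM.mem_supp_of_isSymm hsymm hX,
      fun hX => ⟨hM.entry_mem_suppIdeal hX, hM.isQM.isSymm hX.1⟩⟩
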